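/- If A ⊂ Z^q is a minimal set of representatives of all types (A represents all types but no proper subset of A does), then A contains a basis of R^{c(A)}, i.e., A contains c(A) vectors that are linearly independent over R when restricted to the c(A) coordinates on which A is supported. -/

import Mathlib

/-!
Let `W` be a real vector orthogonal to every `a ∈ A`, and suppose `W j ≠ 0` where `a₀ j ≠ 0` for
some `a₀ ∈ A`. By minimality some type `σ` is represented by no element of `A \ {a₀}`. Let `b ∈ A`
represent the type equal to `sign W` where `W ≠ 0` and to `σ` elsewhere, with sign `η`. Then
`η ∑ W i b i = ∑ |W i| |b i|`, so orthogonality forces `b` to vanish wherever `W ≠ 0`. Hence `b`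
also represents `σ` and `b j = 0 ≠ a₀ j`, a contradiction. So the restrictions of the elements
of `A` to `supp A` span `ℝ^{c(A)}`, and a basis can be extracted from them.
-/

/-- A `q`-type is a tuple of signs `±1`. -/
def IsType {q : ℕ} (τ : Fin q → ℤ) : Prop := ∀ i, τ i = 1 ∨ τ i = -1

/-- `a ∈ ℤ^q` represents the `q`-type `τ`: for some `η = ±1`, `sign (a i) = η * τ i`
whenever `a i ≠ 0`, and `∑ |a i| ≥ 2`. -/
def Represents {q : ℕ} (a τ : Fin q → ℤ) : Prop :=
  (∃ η : ℤ, (η = 1 ∨ η = -1) ∧ ∀ i, a i ≠ 0 → Int.sign (a i) = η * τ i) ∧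
  2 ≤ ∑ i, |a i|

/-- A set `A ⊆ ℤ^q` represents all `q`-types. -/
def RepresentsAll {q : ℕ} (A : Set (Fin q → ℤ)) : Prop :=
  ∀ τ : Fin q → ℤ, IsType τ → ∃ a ∈ A, Represents a τ

/-- The support of a set of vectors: coordinates where some vector is nonzero. -/
def supp {q : ℕ} (A : Set (Fin q → ℤ)) : Set (Fin q) := {i | ∃ a ∈ A, a i ≠ 0}

theorem exists_finset_linearIndepOn_card_eq_finrank {ι K V : Type*} [DivisionRing K]
    [AddCommGroup V] [Module K V] [FiniteDimensional K V] {v : ι → V} {s : Set ι}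
    (hs : Submodule.span K (v '' s) = ⊤) :
    ∃ B : Finset ι, ↑B ⊆ s ∧ B.card = Module.finrank K V ∧ LinearIndepOn K v ↑B := by
  obtain ⟨b, hbs, -, hsb, hli⟩ :=
    exists_linearIndepOn_extension (linearIndepOn_empty K v) (Set.empty_subset s)
  lift b to Finset ι using hli.finite
  refine ⟨b, hbs, ?_, hli⟩
  have hspan : Submodule.span K (Set.range fun x : (b : Set ι) => v x) = ⊤ := by
    rw [← Set.image_eq_range, eq_top_iff, ← hs]
    exact Submodule.span_le.2 hsb
  rw [← finrank_top K V, ← hspan, finrank_span_eq_card hli]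
  simp

section

variable {q : ℕ}

lemma Represents.exists_mul_mul_eq_abs {a τ : Fin q → ℤ} (h : Represents a τ) :
    ∃ η : ℤ, ∀ i, η * τ i * a i = |a i| := by
  obtain ⟨⟨η, -, hsign⟩, -⟩ := h
  refine ⟨η, fun i => ?_⟩
  by_cases hi : a i = 0
  · simp [hi]
  · rw [← hsign i hi, Int.sign_mul_self_eq_abs]

lemma Represents.of_eq_on_support {a τ σ : Fin q → ℤ} (h : Represents a τ)
    (hτσ : ∀ i, a i ≠ 0 → τ i = σ i) : Represents a σ := by
  obtain ⟨⟨η, hη, hsign⟩, hsum⟩ := h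
  exact ⟨⟨η, hη, fun i hi => hτσ i hi ▸ hsign i hi⟩, hsum⟩

lemma Represents.eq_zero_of_sum_mul_eq_zero {a τ : Fin q → ℤ} (h : Represents a τ)
    {W : Fin q → ℝ} (hτ : ∀ i, W i ≠ 0 → (τ i : ℝ) = SignType.sign (W i))
    (horth : ∑ i, W i * a i = 0) {i : Fin q} (hi : W i ≠ 0) : a i = 0 := by
  obtain ⟨η, hη⟩ := h.exists_mul_mul_eq_abs
  have hterm : ∀ k, (η : ℝ) * (W k * a k) = |W k| * |(a k : ℝ)| := by
    intro k
    by_cases hWk : W k = 0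
    · simp [hWk]
    · have hη' : (η : ℝ) * τ k * a k = |(a k : ℝ)| := by exact_mod_cast hη k
      calc (η : ℝ) * (W k * a k) = |W k| * ((η : ℝ) * SignType.sign (W k) * a k) := by
            conv_lhs => rw [← sign_mul_abs (W k)]
            ring
        _ = |W k| * |(a k : ℝ)| := by rw [← hτ k hWk, hη']
  have hsum : ∑ i, |W i| * |(a i : ℝ)| = 0 := by
    simp_rw [← hterm, ← Finset.mul_sum, horth, mul_zero]
  have := (Finset.sum_eq_zero_iff_of_nonneg (fun k _ => by positivity)).1 hsum i
    (Finset.mem_univ i)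
  simpa [hi] using this

lemma exists_type_only_represented_by_of_minimal {A : Set (Fin q → ℤ)}
    (hmin : ∀ A' ⊂ A, ¬ RepresentsAll A') {a₀ : Fin q → ℤ} (ha₀ : a₀ ∈ A) :
    ∃ σ, IsType σ ∧ ∀ b ∈ A, Represents b σ → b = a₀ := by
  have := hmin (A \ {a₀}) (Set.sdiff_singleton_ssubset.2 ha₀)
  simp only [RepresentsAll, not_forall, not_exists, not_and] at this
  obtain ⟨σ, hσ, hmiss⟩ := this
  exact ⟨σ, hσ, fun b hb hbσ => by_contra fun hne => hmiss b ⟨hb, hne⟩ hbσ⟩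

theorem eq_zero_of_mem_supp_of_forall_sum_mul_eq_zero {A : Set (Fin q → ℤ)} (hA : RepresentsAll A)
    (hmin : ∀ A' ⊂ A, ¬ RepresentsAll A') {W : Fin q → ℝ}
    (horth : ∀ a ∈ A, ∑ i, W i * a i = 0) {j : Fin q} (hj : j ∈ supp A) : W j = 0 := by
  by_contra hWj
  obtain ⟨a₀, ha₀, ha₀j⟩ := hj
  obtain ⟨σ, hσ, hmiss⟩ := exists_type_only_represented_by_of_minimal hmin ha₀
  let τ : Fin q → ℤ := fun i => if W i = 0 then σ i else SignType.sign (W i)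
  have hτ : IsType τ := by
    intro i
    by_cases hWi : W i = 0
    · simpa [τ, hWi] using hσ i
    · rcases lt_or_gt_of_ne hWi with h | h <;> simp [τ, hWi, h]
  obtain ⟨b, hb, hbτ⟩ := hA τ hτ
  have hvanish : ∀ i, W i ≠ 0 → b i = 0 := fun i =>
    hbτ.eq_zero_of_sum_mul_eq_zero (fun k hWk => by simp [τ, hWk]) (horth b hb)
  have hbσ : Represents b σ := hbτ.of_eq_on_support fun i hbi => by
    simp [τ, not_imp_comm.1 (hvanish i) hbi]
  exact ha₀j (hmiss b hb hbσ ▸ hvanish j hWj)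

def suppRestrict (A : Set (Fin q → ℤ)) (a : Fin q → ℤ) : supp A → ℝ := fun i => a i

theorem span_suppRestrict_eq_top {A : Set (Fin q → ℤ)} (hA : RepresentsAll A)
    (hmin : ∀ A' ⊂ A, ¬ RepresentsAll A') :
    Submodule.span ℝ (suppRestrict A '' A) = ⊤ := by
  by_contra hne
  obtain ⟨φ, hφ, hker⟩ :=
    (Submodule.span ℝ (suppRestrict A '' A)).exists_le_ker_of_lt_top (lt_top_iff_ne_top.2 hne)
  let ψ := φ ∘ₗ LinearMap.funLeft ℝ ℝ ((↑) : supp A → Fin q)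
  have hψ : ∀ x, ψ x = ∑ i, ψ (Pi.single i 1) * x i := fun x => by
    rw [ψ.pi_apply_eq_sum_univ x]
    refine Finset.sum_congr rfl fun i _ => ?_
    rw [smul_eq_mul, mul_comm]
    congr 2; ext j; simp [Pi.single_apply, eq_comm]
  have horth : ∀ a ∈ A, ∑ i, ψ (Pi.single i 1) * a i = 0 := fun a ha => by
    rw [← hψ]; exact hker (Submodule.subset_span ⟨a, ha, rfl⟩)
  apply hφ
  refine (Pi.basisFun ℝ (supp A)).ext fun i => ?_
  have : Pi.basisFun ℝ (supp A) i = LinearMap.funLeft ℝ ℝ (↑) (Pi.single i.1 (1 : ℝ)) := by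
    ext j; simp [Pi.single_apply, Subtype.ext_iff]
  rw [this]
  exact eq_zero_of_mem_supp_of_forall_sum_mul_eq_zero hA hmin horth i.2

end

/-- If `A` is a minimal set of representatives of all types, then `A` contains `c(A)`
vectors that are linearly independent over `ℝ` when restricted to the support of `A`,
i.e. `A` contains a basis of `ℝ^{c(A)}`. -/
theorem minimal_representsAll_contains_basis {q : ℕ} (A : Set (Fin q → ℤ))
    (hA : RepresentsAll A) (hmin : ∀ A' ⊂ A, ¬ RepresentsAll A') :
    ∃ B : Finset (Fin q → ℤ), ↑B ⊆ A ∧ B.card = (supp A).ncard ∧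
      LinearIndependent ℝ (fun (b : B) => fun (i : supp A) => ((b : Fin q → ℤ) i.1 : ℝ)) := by
  have : Fintype (supp A) := Fintype.ofFinite _
  obtain ⟨B, hBA, hcard, hli⟩ :=
    exists_finset_linearIndepOn_card_eq_finrank (span_suppRestrict_eq_top hA hmin)
  refine ⟨B, hBA, ?_, hli⟩
  rw [hcard, Module.finrank_fintype_fun_eq_card, ← Nat.card_eq_fintype_card,
    Nat.card_coe_set_eq]
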